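/- Let 1 < p < ∞, v a weight sequence with (v_{n+1}/v_n) bounded, and r, s nonzero reals. Then the point spectrum of B(r,s) on l_p(v) is empty; i.e., B(r,s) - αI is injective on l_p(v) for every α ∈ ℂ. -/

import Mathlib

/-!
`B(r,s)` is lower bidiagonal with constant diagonal `r` and subdiagonal `s ≠ 0`, so the eigenvalue
equation `B(r,s) x = α x` already forces `x = 0` coordinatewise. For `α ≠ r` it gives
`(r - α) x₀ = 0` and then `(r - α) xₙ₊₁ = -s xₙ = 0` recursively; for `α = r` the diagonal
terms cancel and the equation at `n + 1` reads `s xₙ = 0`.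
-/

/-- The generalized difference operator `B(r,s)` on sequences:
`(B(r,s)x)_n = s x_{n-1} + r x_n` with `x_{-1} := 0`. -/
def Bop (r s : ℝ) (x : ℕ → ℂ) : ℕ → ℂ
  | 0 => (r : ℂ) * x 0
  | (n + 1) => (s : ℂ) * x n + (r : ℂ) * x (n + 1)

theorem Bop_zero (r s : ℝ) (x : ℕ → ℂ) : Bop r s x 0 = r * x 0 := rfl

theorem Bop_succ (r s : ℝ) (x : ℕ → ℂ) (n : ℕ) :
    Bop r s x (n + 1) = s * x n + r * x (n + 1) := rfl

theorem Bop_eigenvector_eq_zero_of_ne {r s : ℝ} {α : ℂ} {x : ℕ → ℂ} (hα : α ≠ r)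
    (heig : ∀ n, Bop r s x n = α * x n) : x = 0 := by
  have hrα : (r : ℂ) - α ≠ 0 := sub_ne_zero.mpr (Ne.symm hα)
  suffices hx : ∀ n, x n = 0 from funext hx
  intro n
  induction n with
  | zero =>
    have h : ((r : ℂ) - α) * x 0 = 0 := by linear_combination heig 0 - Bop_zero r s x
    simpa [hrα] using h
  | succ n ih =>
    have h : ((r : ℂ) - α) * x (n + 1) = 0 := by
      linear_combination heig (n + 1) - Bop_succ r s x n - (s : ℂ) * ih
    simpa [hrα] using h

theorem Bop_eigenvector_eq_zero_of_eq {r s : ℝ} {x : ℕ → ℂ} (hs : s ≠ 0)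
    (heig : ∀ n, Bop r s x n = r * x n) : x = 0 := by
  have hs' : (s : ℂ) ≠ 0 := Complex.ofReal_ne_zero.mpr hs
  funext n
  have h : (s : ℂ) * x n = 0 := by linear_combination heig (n + 1) - Bop_succ r s x n
  simpa [hs'] using h

theorem stmt6_general
    (r s : ℝ) (hs : s ≠ 0) (α : ℂ) (x : ℕ → ℂ)
    (heig : ∀ n, Bop r s x n = α * x n) : x = 0 := by
  by_cases hα : α = r
  · subst hα
    exact Bop_eigenvector_eq_zero_of_eq hs heig
  · exact Bop_eigenvector_eq_zero_of_ne hα heig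

/-- For `1 < p < ∞`, a weight `v` with `(v_{n+1}/v_n)` bounded and nonzero
reals `r, s`, the point spectrum of `B(r,s)` on `l_p(v)` is empty: for every `α ∈ ℂ`,
the operator `B(r,s) - αI` is injective on `l_p(v)`. -/
theorem stmt6 (p : ℝ) (hp : 1 < p) (v : ℕ → ℝ) (hv : ∀ n, 0 < v n)
    (hbd : ∃ M : ℝ, ∀ n, v (n + 1) / v n ≤ M)
    (r s : ℝ) (hr : r ≠ 0) (hs : s ≠ 0) (α : ℂ) (x : ℕ → ℂ)
    (hx : Summable fun n => (‖x n‖ * v n) ^ p)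
    (heig : ∀ n, Bop r s x n = α * x n) : x = 0 :=
  stmt6_general r s hs α x heig
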